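/- arXiv:1808.04165 — 5 statements merged into one kernel-verified Lean document; each statement's English description precedes it below -/
import Mathlib

section
/- Let R be a commutative Noetherian integral domain and let M be a finitely generated R-module. Then the dual module M^∨ = Hom_R(M, R) is reflexive, i.e. the evaluation map ev_{M^∨} : M^∨ → (M^∨)^∨∨ is bijective. -/
open Module

/-- Key lemma: over a Noetherian domain, the cokernel of the evaluation map
`M → M^∨∨` is torsion: every element of `M^∨∨` has a nonzero multiple in the
image of the evaluation map. -/
theorem exists_smul_eval_eq
    (R : Type*) [CommRing R] [IsDomain R] [IsNoetherianRing R]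
    (M : Type*) [AddCommGroup M] [Module R M] [Module.Finite R M]
    (Z : Module.Dual R (Module.Dual R M)) :
    ∃ t ∈ nonZeroDivisors R, ∃ m : M, t • Z = Module.Dual.eval R M m := by
  classical
  set S := nonZeroDivisors R
  let K := FractionRing R
  haveI hfpM : Module.FinitePresentation R M := Module.finitePresentation_of_finite R M
  obtain ⟨n, q, hq⟩ := Module.Finite.exists_fin' R M
  haveI hDfin : Module.Finite R (Module.Dual R M) :=
    Module.Finite.of_injective q.dualMap (LinearMap.dualMap_injective_of_surjective hq)
  haveI hfpD : Module.FinitePresentation R (Module.Dual R M) :=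
    Module.finitePresentation_of_finite R _
  let Mₛ := LocalizedModule S M
  let fM : M →ₗ[R] Mₛ := LocalizedModule.mkLinearMap S M
  let g : R →ₗ[R] K := Algebra.linearMap R K
  let h1 : Module.Dual R M →ₗ[R] (Mₛ →ₗ[K] K) :=
    IsLocalizedModule.mapExtendScalars S fM g K
  haveI ih1 : IsLocalizedModule S h1 :=
    Module.FinitePresentation.isLocalizedModule_mapExtendScalars S fM g K
  let h2 : Module.Dual R (Module.Dual R M) →ₗ[R] ((Mₛ →ₗ[K] K) →ₗ[K] K) :=
    IsLocalizedModule.mapExtendScalars S h1 g K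
  haveI ih2 : IsLocalizedModule S h2 :=
    Module.FinitePresentation.isLocalizedModule_mapExtendScalars S h1 g K
  -- cancellation of `S`-scalars on `K`
  have hcan : ∀ (s : S) (x y : K), (s : R) • x = (s : R) • y → x = y := by
    intro s x y h
    have hs : algebraMap R K (s : R) ≠ 0 := by
      simp only [ne_eq]
      exact (IsFractionRing.to_map_eq_zero_iff (K := K)).not.mpr
        (nonZeroDivisors.ne_zero s.2)
    rw [Algebra.smul_def, Algebra.smul_def] at h
    exact mul_left_cancel₀ hs h
  -- the commuting square: `h2 ∘ ev_M = ev_{Mₛ} ∘ fM`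
  have square : ∀ m : M,
      h2 (Module.Dual.eval R M m) = Module.Dual.eval K Mₛ (fM m) := by
    intro m
    apply LinearMap.ext
    intro Φ
    obtain ⟨⟨φ, s⟩, hs0⟩ := IsLocalizedModule.surj S h1 Φ
    have hs : (s : R) • Φ = h1 φ := hs0
    apply hcan s
    have e1 : (s : R) • (h2 (Module.Dual.eval R M m)) Φ
        = (h2 (Module.Dual.eval R M m)) (h1 φ) := by
      rw [← LinearMap.map_smul_of_tower]
      exact congrArg _ hs
    have e2 : (s : R) • (Module.Dual.eval K Mₛ (fM m)) Φ
        = (h1 φ) (fM m) := by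
      rw [Module.Dual.eval_apply, ← LinearMap.smul_apply, hs]
    rw [e1, e2]
    have e3 : (h2 (Module.Dual.eval R M m)) (h1 φ)
        = g ((Module.Dual.eval R M m) φ) := by
      rw [show h2 (Module.Dual.eval R M m) (h1 φ)
          = (IsLocalizedModule.map S h1 g) (Module.Dual.eval R M m) (h1 φ) from
        IsLocalizedModule.mapExtendScalars_apply_apply ..]
      exact IsLocalizedModule.map_apply S h1 g _ φ
    have e4 : (h1 φ) (fM m) = g (φ m) := by
      rw [show h1 φ (fM m) = (IsLocalizedModule.map S fM g) φ (fM m) from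
        IsLocalizedModule.mapExtendScalars_apply_apply ..]
      exact IsLocalizedModule.map_apply S fM g φ m
    rw [e3, e4]
    simp [Module.Dual.eval_apply]
  -- `Mₛ` is a reflexive `K`-module
  haveI : Module.Finite K Mₛ := by
    haveI : Module.FinitePresentation (Localization S) (LocalizedModule S M) :=
      inferInstance
    exact inferInstanceAs (Module.Finite (Localization S) (LocalizedModule S M))
  haveI : Module.IsReflexive K Mₛ := inferInstance
  -- now the torsion argument
  obtain ⟨x, hx⟩ := (Module.bijective_dual_eval K Mₛ).surjective (h2 Z)
  obtain ⟨⟨m, s⟩, hms0⟩ := IsLocalizedModule.surj S fM x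
  have hms : (s : R) • x = fM m := hms0
  have hZ : h2 ((s : R) • Z) = h2 (Module.Dual.eval R M m) := by
    rw [LinearMap.map_smul, ← hx, ← LinearMap.map_smul_of_tower, hms, ← square m]
  obtain ⟨c, hc0⟩ := IsLocalizedModule.exists_of_eq (S := S) (f := h2) hZ
  have hc : (c : R) • ((s : R) • Z) = (c : R) • Module.Dual.eval R M m := hc0
  refine ⟨(c : R) * (s : R), mul_mem c.2 s.2, (c : R) • m, ?_⟩
  rw [mul_smul, hc, ← LinearMap.map_smul]

/-- Over a commutative Noetherian integral domain `R`, the dual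
`M^∨ = Hom_R(M, R)` of any finitely generated `R`-module `M` is reflexive, i.e. the
evaluation map `M^∨ → (M^∨)^∨∨` is bijective. -/
theorem dual_of_finite_is_reflexive
    (R : Type*) [CommRing R] [IsDomain R] [IsNoetherianRing R]
    (M : Type*) [AddCommGroup M] [Module R M] [Module.Finite R M] :
    Function.Bijective (Module.Dual.eval R (Module.Dual R M)) := by
  constructor
  · intro φ ψ h
    ext m
    have := LinearMap.congr_fun h (Module.Dual.eval R M m)
    simpa [Module.Dual.eval_apply] using this
  · intro Ξ
    refine ⟨Ξ ∘ₗ Module.Dual.eval R M, ?_⟩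
    ext Z
    obtain ⟨t, ht, m, hm⟩ := exists_smul_eval_eq R M Z
    have key : t * (Module.Dual.eval R (Module.Dual R M))
        (Ξ ∘ₗ Module.Dual.eval R M) Z = t * Ξ Z := by
      have l1 : t • Z (Ξ ∘ₗ Module.Dual.eval R M)
          = (Ξ ∘ₗ Module.Dual.eval R M) m := by
        rw [← LinearMap.smul_apply, hm]; simp [Module.Dual.eval_apply]
      have l2 : Ξ (t • Z) = Ξ (Module.Dual.eval R M m) := by rw [hm]
      rw [LinearMap.map_smul] at l2
      simp only [Module.Dual.eval_apply, smul_eq_mul] at l1 l2 ⊢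
      rw [l1, l2]
      rfl
    exact mul_left_cancel₀ (nonZeroDivisors.ne_zero ht) key
end

section
/- Let R be a commutative ring and let M, N be R-modules such that the dual M^∨ is reflexive and N is reflexive. Then precomposition with the evaluation map ev_M : M → M^∨∨ gives a bijection Hom_R(M^∨∨, N) → Hom_R(M, N), f ↦ f ∘ ev_M. -/
/-- If `M^∨` is reflexive and `N` is reflexive, then precomposition with the
evaluation map `ev_M : M → M^∨∨` is a bijection `Hom_R(M^∨∨, N) → Hom_R(M, N)`. -/
theorem precomp_eval_bijective
    (R : Type*) [CommRing R]
    (M N : Type*) [AddCommGroup M] [Module R M] [AddCommGroup N] [Module R N]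
    (hM : Function.Bijective (Module.Dual.eval R (Module.Dual R M)))
    (hN : Function.Bijective (Module.Dual.eval R N)) :
    Function.Bijective
      (fun f : Module.Dual R (Module.Dual R M) →ₗ[R] N => f ∘ₗ Module.Dual.eval R M) := by
  constructor
  · intro f₁ f₂ hf
    simp only at hf
    ext x
    apply hN.injective
    ext φ
    -- goal: φ (f₁ x) = φ (f₂ x)
    obtain ⟨ψ₁, hψ₁⟩ := hM.surjective (φ ∘ₗ f₁)
    obtain ⟨ψ₂, hψ₂⟩ := hM.surjective (φ ∘ₗ f₂)
    have hψ : ψ₁ = ψ₂ := by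
      ext m
      have h1 := congrArg (fun k : M →ₗ[R] N => φ (k m)) hf
      simp only [LinearMap.comp_apply] at h1
      have e1 := congrArg (fun k => k (Module.Dual.eval R M m)) hψ₁
      have e2 := congrArg (fun k => k (Module.Dual.eval R M m)) hψ₂
      simp only [Module.Dual.eval_apply, LinearMap.comp_apply] at e1 e2
      rw [← e1, ← e2] at h1
      exact h1
    have := hψ₁.symm.trans (by rw [hψ] : Module.Dual.eval R (Module.Dual R M) ψ₁ =
      Module.Dual.eval R (Module.Dual R M) ψ₂) |>.trans hψ₂
    have := congrArg (fun k => k x) this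
    simpa using this
  · intro g
    refine ⟨(LinearEquiv.ofBijective _ hN).symm.toLinearMap ∘ₗ g.dualMap.dualMap, ?_⟩
    simp only
    ext m
    have h1 : g.dualMap.dualMap (Module.Dual.eval R M m) = Module.Dual.eval R N (g m) :=
      congrFun (congrArg DFunLike.coe (Module.Dual.eval_naturality g)) m
    simp only [LinearMap.comp_apply, h1]
    exact (LinearEquiv.ofBijective _ hN).symm_apply_apply (g m)
end

section
/- Let R be a commutative Noetherian integral domain. Then the inclusion functor from the full subcategory of ModuleCat R consisting of finitely generated reflexive R-modules into the full subcategory of finitely generated R-modules admits a left adjoint (given on objects by bidualization M ↦ M^∨∨, with unit the evaluation map). -/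
/-!
Invert the nonzero elements of `R`: `M` becomes a finite-dimensional vector space over the
fraction field, where evaluation is bijective, and since `M` and `M^∨` are finitely presented,
dualizing commutes with this localization. Hence the cokernel of `ev_M : M → M^∨∨` is torsion.
A functional on `M^∨∨` killing `ev_M(M)` therefore vanishes, so `ev_M^∨` is injective; being a
retraction of `ev_{M^∨}`, it makes `M^∨` and hence `M^∨∨` reflexive. For reflexive `N`, a map
`M^∨∨ → N` is thus determined by its restriction along `ev_M`, and `f ↦ ev_N⁻¹ ∘ f^∨∨` inverts
restriction.

The bidual of `M : Type v` lives in a larger universe; it is shrunk back using a single nonzero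
`r` with `r • M^∨∨ ⊆ ev_M(M)`, which exists because the torsion cokernel is finitely generated.
-/

open CategoryTheory

/-- The property of a bundled `R`-module of being finitely generated and reflexive
(the evaluation map to the double dual is bijective). -/
def isFGReflexive (R : Type*) [CommRing R] (M : ModuleCat R) : Prop :=
  Module.Finite R M ∧ Function.Bijective (Module.Dual.eval R M)

open Module
open scoped nonZeroDivisors

universe v

namespace Module

section Localization

variable {R : Type*} [CommRing R] (S : Submonoid R) (Rₛ : Type*) [CommRing Rₛ] [Algebra R Rₛ]
  [IsLocalization S Rₛ] {M M' : Type*} [AddCommGroup M] [Module R M] [AddCommGroup M']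
  [Module R M'] [Module Rₛ M'] [IsScalarTower R Rₛ M'] (f : M →ₗ[R] M') [IsLocalizedModule S f]

noncomputable abbrev Dual.localizedMap : Dual R M →ₗ[R] Dual Rₛ M' :=
  IsLocalizedModule.mapExtendScalars S f (Algebra.linearMap R Rₛ) Rₛ

lemma Dual.localizedMap_localizedMap_eval [Module.FinitePresentation R M] (m : M) :
    Dual.localizedMap S Rₛ (Dual.localizedMap S Rₛ f) (Dual.eval R M m) =
      Dual.eval Rₛ M' (f m) := by
  apply LinearMap.restrictScalars_injective R
  apply IsLocalizedModule.linearMap_ext S (Dual.localizedMap S Rₛ f) (Algebra.linearMap R Rₛ)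
  ext φ
  simp

end Localization

variable {R M : Type*} [CommRing R] [AddCommGroup M] [Module R M]

instance Finite.dual_of_isNoetherianRing [IsNoetherianRing R] [Module.Finite R M] :
    Module.Finite R (Dual R M) := by
  obtain ⟨n, f, hf⟩ := Module.Finite.exists_fin' R M
  exact .of_injective f.dualMap (f.dualMap_injective_of_surjective hf)

lemma exists_smul_mem_range_dual_eval [IsDomain R] [IsNoetherianRing R] [Module.Finite R M]
    (ξ : Dual R (Dual R M)) : ∃ r ∈ R⁰, r • ξ ∈ LinearMap.range (Dual.eval R M) := by
  let K := FractionRing R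
  let f := LocalizedModule.mkLinearMap R⁰ M
  have := Module.finitePresentation_of_finite R M
  have := Module.finitePresentation_of_finite R (Dual R M)
  have := Module.Finite.of_isLocalizedModule R⁰ (Rₚ := K) f
  let ψ := Dual.localizedMap R⁰ K (Dual.localizedMap R⁰ K f)
  obtain ⟨x, hx⟩ := (bijective_dual_eval K (LocalizedModule R⁰ M)).2 (ψ ξ)
  obtain ⟨⟨m, s⟩, hm⟩ := IsLocalizedModule.surj R⁰ f x
  have hψ : ψ ((s : R) • ξ) = ψ (Dual.eval R M m) := by
    rw [map_smul, Dual.localizedMap_localizedMap_eval, ← hx, ← LinearMap.map_smul_of_tower,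
      ← Submonoid.smul_def, hm]
  obtain ⟨c, hc⟩ := IsLocalizedModule.exists_of_eq (S := R⁰) (f := ψ) hψ
  refine ⟨c * s, mul_mem c.2 s.2, (c : R) • m, ?_⟩
  rw [map_smul, mul_smul]
  exact hc.symm

lemma exists_mem_nonZeroDivisors_forall_smul_mem_range_dual_eval [IsDomain R] [IsNoetherianRing R]
    [Module.Finite R M] : ∃ r ∈ R⁰, ∀ ξ : Dual R (Dual R M),
      r • ξ ∈ LinearMap.range (Dual.eval R M) := by
  have hQ : IsTorsion R (Dual R (Dual R M) ⧸ LinearMap.range (Dual.eval R M)) := by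
    rintro ⟨ξ⟩
    obtain ⟨r, hr, hξ⟩ := exists_smul_mem_range_dual_eval ξ
    exact ⟨⟨r, hr⟩, (Submodule.Quotient.mk_eq_zero _).2 hξ⟩
  obtain ⟨r, hr, hr₀⟩ := Submodule.annihilator_top_inter_nonZeroDivisors hQ
  refine ⟨r, hr₀, fun ξ => (Submodule.Quotient.mk_eq_zero _).1 ?_⟩
  rw [Submodule.Quotient.mk_smul]
  exact Submodule.mem_annihilator.1 hr _ Submodule.mem_top

lemma injective_dualMap_dual_eval [IsDomain R] [IsNoetherianRing R] [Module.Finite R M] :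
    Function.Injective (Dual.eval R M).dualMap := by
  refine (injective_iff_map_eq_zero _).2 fun τ hτ => LinearMap.ext fun ξ => ?_
  obtain ⟨r, hr, m, hm⟩ := exists_smul_mem_range_dual_eval ξ
  have : r * τ ξ = 0 := by
    rw [← smul_eq_mul, ← map_smul, ← hm]
    exact LinearMap.congr_fun hτ m
  exact (mul_eq_zero.1 this).resolve_left (nonZeroDivisors.ne_zero hr)

instance IsReflexive.dual_of_isNoetherianRing [IsDomain R] [IsNoetherianRing R]
    [Module.Finite R M] : IsReflexive R (Dual R M) where
  bijective_dual_eval' := by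
    have hinv : (Dual.eval R M).dualMap ∘ₗ Dual.eval R (Dual R M) = .id := rfl
    refine ⟨Function.LeftInverse.injective (g := (Dual.eval R M).dualMap)
      (LinearMap.congr_fun hinv),
      fun ζ => ⟨(Dual.eval R M).dualMap ζ, injective_dualMap_dual_eval ?_⟩⟩
    exact LinearMap.congr_fun hinv _

lemma eq_zero_of_comp_dual_eval_eq_zero [IsDomain R] [IsNoetherianRing R] [Module.Finite R M]
    {N : Type*} [AddCommGroup N] [Module R N] (hN : Function.Injective (Dual.eval R N))
    {g : Dual R (Dual R M) →ₗ[R] N} (hg : g ∘ₗ Dual.eval R M = 0) : g = 0 := by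
  refine LinearMap.ext fun ξ => hN (LinearMap.ext fun φ => ?_)
  have : (Dual.eval R M).dualMap (φ ∘ₗ g) = 0 := by
    rw [LinearMap.dualMap_apply', LinearMap.comp_assoc, hg, LinearMap.comp_zero]
  simpa using LinearMap.congr_fun ((map_eq_zero_iff _ injective_dualMap_dual_eval).1 this) ξ

lemma bijective_comp_dual_eval [IsDomain R] [IsNoetherianRing R] [Module.Finite R M]
    (N : Type*) [AddCommGroup N] [Module R N] [IsReflexive R N] :
    Function.Bijective fun g : Dual R (Dual R M) →ₗ[R] N => g ∘ₗ Dual.eval R M := by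
  refine ⟨fun g₁ g₂ h => sub_eq_zero.1 ?_, fun f => ⟨(evalEquiv R N).symm ∘ₗ f.dualMap.dualMap, ?_⟩⟩
  · exact eq_zero_of_comp_dual_eval_eq_zero (bijective_dual_eval R N).1
      (by rw [LinearMap.sub_comp]; exact sub_eq_zero.2 h)
  · ext m
    exact (evalEquiv R N).symm_apply_apply (f m)

instance small_dual_dual [IsDomain R] [IsNoetherianRing R] [Module.Finite R M] [Small.{v} M] :
    Small.{v} (Dual R (Dual R M)) := by
  obtain ⟨r, hr, hξ⟩ := exists_mem_nonZeroDivisors_forall_smul_mem_range_dual_eval (R := R) (M := M)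
  refine small_of_injective (β := Set.range (Dual.eval R M)) (f := fun ξ => ⟨r • ξ, hξ ξ⟩)
    fun ξ₁ ξ₂ h => smul_right_injective _ (nonZeroDivisors.ne_zero hr) (congrArg Subtype.val h)

end Module

namespace CategoryTheory.ObjectProperty

lemma isRightAdjoint_ιOfLE_of_bijective_comp {C : Type*} [Category C] {P P' : ObjectProperty C}
    (h : P ≤ P') (H : ∀ X, P' X → ∃ (L : C) (_ : P L) (η : X ⟶ L),
      ∀ Y, P Y → Function.Bijective fun f : L ⟶ Y => η ≫ f) :
    (ιOfLE h).IsRightAdjoint := by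
  refine Functor.isRightAdjoint_of_leftAdjointObjIsDefined_eq_top (top_unique fun X _ => ?_)
  obtain ⟨L, hL, η, hη⟩ := H X.obj X.property
  exact Functor.CorepresentableBy.isCorepresentable (X := ⟨L, hL⟩)
    { homEquiv := fun {Y} => Equiv.ofBijective (fun f => homMk (η ≫ f.hom))
        (InducedCategory.homEquiv.symm.bijective.comp
          ((hη Y.obj Y.property).comp InducedCategory.homEquiv.bijective))
      homEquiv_comp := fun g f => hom_ext _ (Category.assoc η f.hom g.hom).symm }

end CategoryTheory.ObjectProperty

namespace ModuleCat

variable {R : Type*} [CommRing R] [IsDomain R] [IsNoetherianRing R]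

noncomputable def bidual (M : ModuleCat.{v} R) [Module.Finite R M] : ModuleCat.{v} R :=
  of R (Shrink.{v} (Dual R (Dual R M)))

noncomputable def bidualEval (M : ModuleCat.{v} R) [Module.Finite R M] : M ⟶ M.bidual :=
  ofHom ((Shrink.linearEquiv R (Dual R (Dual R M))).symm.toLinearMap ∘ₗ Dual.eval R M)

lemma isFGReflexive_bidual (M : ModuleCat.{v} R) [Module.Finite R M] :
    isFGReflexive R M.bidual :=
  have e := (Shrink.linearEquiv R (Dual R (Dual R M))).symm
  ⟨.equiv e, (Module.equiv e).bijective_dual_eval'⟩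

lemma bijective_bidualEval_comp (M N : ModuleCat.{v} R) [Module.Finite R M] [IsReflexive R N] :
    Function.Bijective fun f : M.bidual ⟶ N => M.bidualEval ≫ f :=
  homEquiv.symm.bijective.comp <| (bijective_comp_dual_eval N).comp <|
    (LinearEquiv.arrowCongr (Shrink.linearEquiv R _) (.refl R N)).bijective.comp homEquiv.bijective

end ModuleCat

/-- Over a commutative Noetherian integral domain `R`, the inclusion of the
full subcategory of finitely generated reflexive `R`-modules into the full subcategory of
finitely generated `R`-modules admits a left adjoint (bidualization). -/
theorem fgReflexive_inclusion_isRightAdjoint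
    (R : Type*) [CommRing R] [IsDomain R] [IsNoetherianRing R] :
    (ObjectProperty.ιOfLE (P := isFGReflexive R) (P' := fun M : ModuleCat R => Module.Finite R M)
        (fun M (h : isFGReflexive R M) => h.1 :
          ∀ M : ModuleCat R, isFGReflexive R M → Module.Finite R M)).IsRightAdjoint := by
  refine ObjectProperty.isRightAdjoint_ιOfLE_of_bijective_comp _ fun M (_ : Module.Finite R M) =>
    ⟨M.bidual, M.isFGReflexive_bidual, M.bidualEval, fun N hN => ?_⟩
  have : IsReflexive R N := ⟨hN.2⟩
  exact M.bijective_bidualEval_comp N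
end

section
/- Let C be an abelian category, n ≥ 0, and F : ComposableArrows C n a chain of n composable arrows in C. Then there exist T, E : ComposableArrows C n and natural transformations i : T ⟶ F and p : F ⟶ E such that: (1) for every 0 ≤ k ≤ n, the sequence 0 → T.obj k → F.obj k → E.obj k → 0 given by the components of i and p is a short exact sequence in C; (2) the object T.obj n is a zero object; and (3) every structure map E.obj k → E.obj (k+1) of E is a monomorphism. (Explicitly, one may take T.obj k to be the kernel, and E.obj k the image, of the composite map F.obj k → F.obj n.) -/
open CategoryTheory CategoryTheory.Limits

/-!
With `X` the last object of the chain `F`, the maps `F.obj k ⟶ F.obj X` form a natural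
transformation `α : F ⟶ const X`. In the abelian functor category, `kernel α ⟶ F ⟶ coimage α` is
short exact, and it stays so after evaluating at each `k`. The component of `α` at `X` is the
identity, so the kernel vanishes there; the coimage embeds into the constant functor, which forces
all of its structure maps to be monomorphisms.
-/

namespace CategoryTheory

variable {C : Type*} [Category C] [Abelian C]

lemma Abelian.shortExact_kernel_ι_coimage_π {X Y : C} (f : X ⟶ Y) :
    (ShortComplex.mk (kernel.ι f) (coimage.π f) (by simp)).ShortExact where
  exact := ShortComplex.exact_cokernel (kernel.ι f)

variable {J : Type*} [Category J]

lemma NatTrans.isZero_kernel_obj_of_mono_app {F G : J ⥤ C} (α : F ⟶ G) (j : J)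
    [Mono (α.app j)] : IsZero ((kernel α).obj j) := by
  have hι : (kernel.ι α).app j = 0 := by
    rw [← cancel_mono (α.app j), ← NatTrans.comp_app, kernel.condition, zero_comp,
      NatTrans.app_zero]
  exact IsZero.of_mono_eq_zero _ hι

lemma Functor.mono_map_of_mono_toConst {G : J ⥤ C} {Y : C} (β : G ⟶ (Functor.const J).obj Y)
    [Mono β] {j j' : J} (f : j ⟶ j') : Mono (G.map f) := by
  have hfac : G.map f ≫ β.app j' = β.app j := (β.naturality f).trans (Category.comp_id _)
  exact mono_of_mono_fac hfac

end CategoryTheory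

/-- Every chain `F` of `n` composable arrows in an abelian category `C`
fits into a short exact sequence of chains `0 ⟶ T ⟶ F ⟶ E ⟶ 0` (componentwise short exact),
where the last object of `T` is zero and all structure maps of `E` are monomorphisms. -/
theorem torsion_ses_of_composableArrows
    (C : Type*) [Category C] [Abelian C] (n : ℕ) (F : ComposableArrows C n) :
    ∃ (T E : ComposableArrows C n) (i : T ⟶ F) (p : F ⟶ E),
      (∀ k : Fin (n + 1),
        ∃ w : i.app k ≫ p.app k = 0, (ShortComplex.mk (i.app k) (p.app k) w).ShortExact) ∧
      IsZero (T.obj' n) ∧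
      (∀ (k : ℕ) (hk : k < n), Mono (E.map' k (k + 1) (by omega) (by omega))) := by
  let α := (coconeOfDiagramTerminal (Preorder.isTerminalTop (Fin (n + 1))) F).ι
  have hses := Abelian.shortExact_kernel_ι_coimage_π α
  refine ⟨kernel α, Abelian.coimage α, kernel.ι α, Abelian.coimage.π α,
    fun k => ⟨_, hses.map_of_exact ((evaluation _ C).obj k)⟩, ?_, fun _ _ => ?_⟩
  · have : Mono (α.app ⊤) := by
      dsimp only [α, coconeOfDiagramTerminal_ι_app]
      rw [IsTerminal.from_self, F.map_id]
      infer_instance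
    exact NatTrans.isZero_kernel_obj_of_mono_app α ⊤
  · exact Functor.mono_map_of_mono_toConst (Abelian.factorThruCoimage α) _
end

section
/- Let C be an essentially small abelian category in which every object has only finitely many subobjects. Let H denote the ℚ-vector space of functions from the set of isomorphism classes of objects of C to ℚ. For φ, ψ ∈ H and an object E of C, define (φ ∗ ψ)([E]) = Σ_{B ∈ Subobject(E)} φ([B]) · ψ([E/B]), where the sum runs over all subobjects B of E and E/B denotes the cokernel of the inclusion B → E. Then this formula is well defined on isomorphism classes (independent of the chosen representative E), the product ∗ is associative, and the indicator function of the isomorphism class of the zero object is a two-sided unit; thus (H, ∗) is an associative unital ℚ-algebra. -/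
open CategoryTheory CategoryTheory.Limits ZeroObject

open scoped Classical

/-!
An isomorphism `E ≅ E'` transports subobjects bijectively and preserves the classes of `B` and
`E/B`, so the convolution is well defined. For the unit, `B ≅ 0` only for `B = ⊥` and `E/B ≅ 0`
only for `B = ⊤`.

Both triple products equal the sum over flags `A ≤ B ≤ E` of `φ[A] ψ[B/A] χ[E/B]`. For
`(φ ∗ ψ) ∗ χ` this is the identification of subobjects of `B` with subobjects of `E` below `B`.
For `φ ∗ (ψ ∗ χ)` it is the correspondence theorem: with `p : E ⟶ E/A` the projection,
`D ↦ p⁻¹ D` is a bijection from subobjects of `E/A` onto subobjects of `E` above `A`, inverse to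
taking the image under `p`, and `D ≅ B/A`, `(E/A)/D ≅ E/B` for `B = p⁻¹ D` because an epimorphism
is the cokernel of its kernel.
-/

theorem finsum_sigma_of_finite {ι M : Type*} {κ : ι → Type*} [AddCommMonoid M] [Finite ι]
    [∀ i, Finite (κ i)] (f : (Σ i, κ i) → M) : ∑ᶠ p, f p = ∑ᶠ i, ∑ᶠ j, f ⟨i, j⟩ := by
  have := Fintype.ofFinite ι
  have := fun i => Fintype.ofFinite (κ i)
  simp only [finsum_eq_sum_of_fintype, Fintype.sum_sigma]

def sigmaIicEquivSigmaIci (α : Type*) [Preorder α] :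
    (Σ b : α, Set.Iic b) ≃ Σ a : α, Set.Ici a where
  toFun p := ⟨p.2, p.1, p.2.2⟩
  invFun p := ⟨p.2, p.1, p.2.2⟩
  left_inv _ := rfl
  right_inv _ := rfl

noncomputable section

namespace CategoryTheory

variable {C : Type*} [Category C]

theorem funext_toSkeleton {α : Type*} {f g : Skeleton C → α}
    (h : ∀ X : C, f (toSkeleton X) = g (toSkeleton X)) : f = g :=
  funext fun x => by rw [← toSkeleton_fromSkeleton_obj x, h]

theorem toSkeleton_eq_toSkeleton_zero_iff [HasZeroObject C] {X : C} :
    toSkeleton X = toSkeleton 0 ↔ IsZero X :=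
  ⟨fun h => (isZero_zero C).of_iso (toSkeleton_eq_toSkeleton_iff.1 h).some,
    fun h => congr_toSkeleton_of_iso h.isoZero⟩

namespace Limits

theorem kernelSubobject_comp [HasZeroMorphisms C] [HasKernels C] [HasPullbacks C] {X Y Z : C}
    (f : X ⟶ Y) (g : Y ⟶ Z) :
    kernelSubobject (f ≫ g) = (Subobject.pullback f).obj (kernelSubobject g) := by
  refine le_antisymm (Subobject.le_of_factors ?_) (Subobject.le_of_factors ?_)
  · rw [pullback_factors_iff, kernelSubobject_factors_iff, Category.assoc]
    exact kernelSubobject_arrow_comp _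
  · rw [kernelSubobject_factors_iff, ← Category.assoc, ← (Subobject.isPullback f _).w,
      Category.assoc, kernelSubobject_arrow_comp, comp_zero]

theorem kernelSubobject_pullbackπ [HasZeroMorphisms C] [HasKernels C] [HasPullbacks C]
    {E Q : C} (p : E ⟶ Q) (D : Subobject Q) :
    kernelSubobject (Subobject.pullbackπ p D) =
      (Subobject.pullback ((Subobject.pullback p).obj D).arrow).obj (kernelSubobject p) := by
  rw [← kernelSubobject_comp_mono _ D.arrow]
  simp only [(Subobject.isPullback p D).w]
  rw [kernelSubobject_comp]

theorem imageSubobject_epi_comp [Abelian C] {X' X Y : C} (h : X' ⟶ X) [Epi h] (f : X ⟶ Y) :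
    imageSubobject (h ≫ f) = imageSubobject f := by
  have := isIso_of_mono_of_epi (Subobject.ofLE _ _ (imageSubobject_comp_le h f))
  exact Subobject.eq_of_comm (asIso (Subobject.ofLE _ _ _)) (Subobject.ofLE_arrow _)

end Limits

namespace Subobject

-- `rw` cannot rewrite `B` inside `cokernel B.arrow`, whose type depends on `B`.
theorem toSkeleton_cokernel_arrow_congr [HasZeroMorphisms C] [HasCokernels C] {E : C}
    {B B' : Subobject E} (h : B = B') :
    toSkeleton (cokernel B.arrow) = toSkeleton (cokernel B'.arrow) := by
  subst h; rfl

def cokernelMkArrowIso [HasZeroMorphisms C] [HasCokernels C] {X E : C} (f : X ⟶ E) [Mono f] :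
    cokernel (mk f).arrow ≅ cokernel f :=
  cokernelIsoOfEq (underlyingIso_hom_comp_eq_mk f).symm ≪≫ cokernelEpiComp _ _

theorem isZero_iff_eq_bot [HasZeroMorphisms C] [HasZeroObject C] {E : C} (B : Subobject E) :
    IsZero (B : C) ↔ B = ⊥ := by
  conv_rhs => rw [← mk_arrow B, mk_eq_bot_iff_zero]
  exact ⟨fun h => h.eq_of_src _ _, IsZero.of_mono_eq_zero _⟩

variable [Abelian C]

theorem isZero_cokernel_arrow_iff_eq_top {E : C} (B : Subobject E) :
    IsZero (cokernel B.arrow) ↔ B = ⊤ := by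
  rw [← Preadditive.epi_iff_isZero_cokernel, ← isIso_arrow_iff_eq_top]
  exact ⟨fun _ => isIso_of_mono_of_epi _, fun _ => inferInstance⟩

instance epi_pullbackπ {E Q : C} (p : E ⟶ Q) [Epi p] (D : Subobject Q) :
    Epi (pullbackπ p D) :=
  Abelian.epi_fst_of_isLimit _ _ (isPullback p D).isLimit

theorem imageSubobject_pullback_arrow_comp {E Q : C} (p : E ⟶ Q) [Epi p] (D : Subobject Q) :
    imageSubobject (((pullback p).obj D).arrow ≫ p) = D := by
  rw [← (isPullback p D).w, imageSubobject_epi_comp, imageSubobject_mono, mk_arrow]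

end Subobject

namespace Abelian

variable [Abelian C] {E : C}

theorem kernelSubobject_cokernel_π (B : Subobject E) :
    kernelSubobject (cokernel.π B.arrow) = B := by
  have := (ShortComplex.exact_iff_image_eq_kernel _).mp (ShortComplex.exact_cokernel B.arrow)
  simpa only [imageSubobject_mono, Subobject.mk_arrow] using this.symm

theorem factors_iff_comp_cokernel_π {W : C} (B : Subobject E) (f : W ⟶ E) :
    B.Factors f ↔ f ≫ cokernel.π B.arrow = 0 := by
  conv_lhs => rw [← kernelSubobject_cokernel_π B]
  exact kernelSubobject_factors_iff _ _

def cokernelKernelSubobjectIso {Y : C} (g : E ⟶ Y) [Epi g] :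
    cokernel (kernelSubobject g).arrow ≅ Y :=
  cokernelIsoOfEq (kernelSubobject_arrow g).symm ≪≫ cokernelEpiComp _ _ ≪≫
    (colimit.isColimit _).coconePointUniqueUpToIso (epiIsCokernelOfKernel _ (kernelIsKernel g))

theorem toSkeleton_cokernel_pullback_arrow {Q : C} (p : E ⟶ Q) [Epi p] (D : Subobject Q) :
    toSkeleton (cokernel ((Subobject.pullback p).obj D).arrow) =
      toSkeleton (cokernel D.arrow) := by
  have hker : kernelSubobject (p ≫ cokernel.π D.arrow) = (Subobject.pullback p).obj D := by
    rw [kernelSubobject_comp, kernelSubobject_cokernel_π]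
  rw [← Subobject.toSkeleton_cokernel_arrow_congr hker]
  exact congr_toSkeleton_of_iso (cokernelKernelSubobjectIso _)

section Correspondence

variable (A : Subobject E)

theorem le_pullback_cokernel_π (D : Subobject (cokernel A.arrow)) :
    A ≤ (Subobject.pullback (cokernel.π A.arrow)).obj D :=
  Subobject.le_of_factors <| (pullback_factors_iff _ _ _).2 <| by
    rw [cokernel.condition]
    exact Subobject.factors_zero

theorem pullback_cokernel_π_imageSubobject {B : Subobject E} (h : A ≤ B) :
    (Subobject.pullback (cokernel.π A.arrow)).obj
      (imageSubobject (B.arrow ≫ cokernel.π A.arrow)) = B := by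
  set p := cokernel.π A.arrow
  set I := imageSubobject (B.arrow ≫ p)
  have hA : A.arrow ≫ cokernel.π B.arrow = 0 := by
    rw [← Subobject.ofLE_arrow h, Category.assoc, cokernel.condition, comp_zero]
  have hI : I.arrow ≫ cokernel.desc _ _ hA = 0 :=
    imageSubobject_arrow_comp_eq_zero (by simp [p])
  refine le_antisymm (Subobject.le_of_factors ?_) (Subobject.le_of_factors ?_)
  · rw [factors_iff_comp_cokernel_π, ← cokernel.π_desc A.arrow _ hA, ← Category.assoc,
      ← (Subobject.isPullback p I).w, Category.assoc, hI, comp_zero]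
  · rw [pullback_factors_iff]
    simpa only [Category.id_comp] using imageSubobject_factors_comp_self (B.arrow ≫ p) (𝟙 _)

def subobjectCokernelEquiv : Subobject (cokernel A.arrow) ≃ Set.Ici A where
  toFun D := ⟨_, le_pullback_cokernel_π A D⟩
  invFun B := imageSubobject (B.1.arrow ≫ cokernel.π A.arrow)
  left_inv D := Subobject.imageSubobject_pullback_arrow_comp _ D
  right_inv B := Subtype.ext (pullback_cokernel_π_imageSubobject A B.2)

end Correspondence

end Abelian

end CategoryTheory

namespace RingelHall

variable {C : Type*} [Category C]

section Convolution

variable [HasZeroMorphisms C] [HasCokernels C]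

def hallConvolution (φ ψ : Skeleton C → ℚ) (E : C) : ℚ :=
  ∑ᶠ B : Subobject E, φ (toSkeleton (B : C)) * ψ (toSkeleton (cokernel B.arrow))

theorem hallConvolution_congr (φ ψ : Skeleton C → ℚ) {E E' : C} (e : E ≅ E') :
    hallConvolution φ ψ E = hallConvolution φ ψ E' := by
  refine finsum_eq_of_bijective _ (Subobject.mapIsoToOrderIso e).bijective fun B => ?_
  induction B using Subobject.ind with | h f => ?_
  rw [Subobject.mapIsoToOrderIso_apply, Subobject.map_mk,
    congr_toSkeleton_of_iso (Subobject.underlyingIso f),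
    congr_toSkeleton_of_iso (Subobject.underlyingIso (f ≫ e.hom)),
    congr_toSkeleton_of_iso (Subobject.cokernelMkArrowIso f),
    congr_toSkeleton_of_iso (Subobject.cokernelMkArrowIso (f ≫ e.hom)),
    congr_toSkeleton_of_iso (cokernelCompIsIso f e.hom)]

def hallMul (φ ψ : Skeleton C → ℚ) (x : Skeleton C) : ℚ :=
  hallConvolution φ ψ ((fromSkeleton C).obj x)

theorem hallMul_toSkeleton (φ ψ : Skeleton C → ℚ) (E : C) :
    hallMul φ ψ (toSkeleton E) = hallConvolution φ ψ E :=
  hallConvolution_congr φ ψ (fromSkeletonToSkeletonIso E)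

end Convolution

variable [Abelian C]

def hallUnit : Skeleton C → ℚ := fun x => if x = toSkeleton (0 : C) then 1 else 0

theorem hallUnit_toSkeleton (X : C) : hallUnit (toSkeleton X) = if IsZero X then 1 else 0 := by
  simp only [hallUnit, toSkeleton_eq_toSkeleton_zero_iff]

theorem hallUnit_hallMul (φ : Skeleton C → ℚ) : hallMul hallUnit φ = φ := by
  refine funext_toSkeleton fun E => ?_
  rw [hallMul_toSkeleton, hallConvolution, finsum_eq_single _ ⊥ fun B hB => by
    rw [hallUnit_toSkeleton, Subobject.isZero_iff_eq_bot, if_neg hB, zero_mul]]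
  rw [hallUnit_toSkeleton, if_pos ((Subobject.isZero_iff_eq_bot _).2 rfl), one_mul,
    congr_toSkeleton_of_iso (cokernelIsoOfEq Subobject.bot_arrow ≪≫ cokernelZeroIsoTarget)]

theorem hallMul_hallUnit (φ : Skeleton C → ℚ) : hallMul φ hallUnit = φ := by
  refine funext_toSkeleton fun E => ?_
  rw [hallMul_toSkeleton, hallConvolution, finsum_eq_single _ ⊤ fun B hB => by
    rw [hallUnit_toSkeleton, Subobject.isZero_cokernel_arrow_iff_eq_top, if_neg hB, mul_zero]]
  rw [hallUnit_toSkeleton, if_pos ((Subobject.isZero_cokernel_arrow_iff_eq_top _).2 rfl),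
    mul_one, congr_toSkeleton_of_iso (asIso (⊤ : Subobject E).arrow)]

-- `(pullback B.arrow).obj A` is `A` as a subobject of `B`, so the middle factor is `ψ [B/A]`.
def flagSummand (φ ψ χ : Skeleton C → ℚ) {E : C} (A B : Subobject E) : ℚ :=
  φ (toSkeleton (A : C)) * ψ (toSkeleton (cokernel ((Subobject.pullback B.arrow).obj A).arrow)) *
    χ (toSkeleton (cokernel B.arrow))

variable [∀ X : C, Finite (Subobject X)]

theorem hallConvolution_hallMul_left (φ ψ χ : Skeleton C → ℚ) (E : C) :
    hallConvolution (hallMul φ ψ) χ E =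
      ∑ᶠ p : Σ A : Subobject E, Set.Ici A, flagSummand φ ψ χ p.1 p.2 :=
  calc hallConvolution (hallMul φ ψ) χ E
      = ∑ᶠ B : Subobject E, ∑ᶠ A : Set.Iic B, flagSummand φ ψ χ A B := by
        refine finsum_congr fun B => ?_
        rw [hallMul_toSkeleton, hallConvolution, finsum_mul]
        refine finsum_eq_of_bijective _ (Subobject.subobjectOrderIso B).bijective fun A₀ => ?_
        have hA₀ : (Subobject.pullback B.arrow).obj (Subobject.subobjectOrderIso B A₀) = A₀ := by
          change (Subobject.pullback B.arrow).obj (Subobject.mk (A₀.arrow ≫ B.arrow)) = A₀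
          rw [← Subobject.map_mk, Subobject.mk_arrow, Subobject.pullback_map_self]
        have hφ : toSkeleton (Subobject.subobjectOrderIso B A₀ : C) = toSkeleton (A₀ : C) :=
          congr_toSkeleton_of_iso (Subobject.underlyingIso _)
        rw [flagSummand, Subobject.toSkeleton_cokernel_arrow_congr hA₀, hφ]
    _ = ∑ᶠ p : Σ B : Subobject E, Set.Iic B, flagSummand φ ψ χ p.2 p.1 :=
        (finsum_sigma_of_finite fun p : Σ B : Subobject E, Set.Iic B =>
          flagSummand φ ψ χ p.2 p.1).symm
    _ = _ := finsum_eq_of_bijective _ (sigmaIicEquivSigmaIci _).bijective fun _ => rfl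

theorem hallConvolution_hallMul_right (φ ψ χ : Skeleton C → ℚ) (E : C) :
    hallConvolution φ (hallMul ψ χ) E =
      ∑ᶠ p : Σ A : Subobject E, Set.Ici A, flagSummand φ ψ χ p.1 p.2 := by
  rw [finsum_sigma_of_finite]
  refine finsum_congr fun A => ?_
  rw [hallMul_toSkeleton, hallConvolution, mul_finsum]
  refine finsum_eq_of_bijective _ (Abelian.subobjectCokernelEquiv A).bijective fun D => ?_
  set p := cokernel.π A.arrow
  set B := (Subobject.pullback p).obj D
  have hker : kernelSubobject (Subobject.pullbackπ p D) = (Subobject.pullback B.arrow).obj A := by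
    rw [kernelSubobject_pullbackπ, Abelian.kernelSubobject_cokernel_π]
  have hψ : toSkeleton (cokernel ((Subobject.pullback B.arrow).obj A).arrow) =
      toSkeleton (D : C) := by
    rw [← Subobject.toSkeleton_cokernel_arrow_congr hker]
    exact congr_toSkeleton_of_iso (Abelian.cokernelKernelSubobjectIso _)
  change _ = flagSummand φ ψ χ A B
  rw [flagSummand, hψ, Abelian.toSkeleton_cokernel_pullback_arrow, mul_assoc]

theorem hallMul_assoc (φ ψ χ : Skeleton C → ℚ) :
    hallMul (hallMul φ ψ) χ = hallMul φ (hallMul ψ χ) :=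
  funext_toSkeleton fun E => by
    rw [hallMul_toSkeleton, hallMul_toSkeleton, hallConvolution_hallMul_left,
      hallConvolution_hallMul_right]

end RingelHall

end

theorem ringelHall_algebra_exists_general
    (C : Type*) [Category C] [Abelian C]
    (hfin : ∀ X : C, Finite (Subobject X)) :
    ∃ mul : (Skeleton C → ℚ) → (Skeleton C → ℚ) → (Skeleton C → ℚ),
      (∀ (φ ψ : Skeleton C → ℚ) (E : C),
        mul φ ψ (toSkeleton E) =
          ∑ᶠ B : Subobject E,
            φ (toSkeleton (B : C)) * ψ (toSkeleton (cokernel B.arrow))) ∧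
      (∀ φ ψ χ : Skeleton C → ℚ, mul (mul φ ψ) χ = mul φ (mul ψ χ)) ∧
      (∀ φ : Skeleton C → ℚ,
        mul (fun x => if x = toSkeleton (0 : C) then (1 : ℚ) else 0) φ = φ) ∧
      (∀ φ : Skeleton C → ℚ,
        mul φ (fun x => if x = toSkeleton (0 : C) then (1 : ℚ) else 0) = φ) := by
  have := hfin
  exact ⟨RingelHall.hallMul, RingelHall.hallMul_toSkeleton, RingelHall.hallMul_assoc,
    RingelHall.hallUnit_hallMul, RingelHall.hallMul_hallUnit⟩

/-- Let `C` be an essentially small abelian category in which every object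
has only finitely many subobjects.  On the `ℚ`-vector space of functions on isomorphism
classes of objects of `C` there is a well-defined convolution product
`(φ ∗ ψ)([E]) = ∑_{B ≤ E} φ([B]) · ψ([E/B])` (independent of the representative `E`),
which is associative and has the indicator function of the class of the zero object
as a two-sided unit. -/
theorem ringelHall_algebra_exists
    (C : Type*) [Category C] [Abelian C] [EssentiallySmall C]
    (hfin : ∀ X : C, Finite (Subobject X)) :
    ∃ mul : (Skeleton C → ℚ) → (Skeleton C → ℚ) → (Skeleton C → ℚ),
      (∀ (φ ψ : Skeleton C → ℚ) (E : C),
        mul φ ψ (toSkeleton E) =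
          ∑ᶠ B : Subobject E,
            φ (toSkeleton (B : C)) * ψ (toSkeleton (cokernel B.arrow))) ∧
      (∀ φ ψ χ : Skeleton C → ℚ, mul (mul φ ψ) χ = mul φ (mul ψ χ)) ∧
      (∀ φ : Skeleton C → ℚ,
        mul (fun x => if x = toSkeleton (0 : C) then (1 : ℚ) else 0) φ = φ) ∧
      (∀ φ : Skeleton C → ℚ,
        mul φ (fun x => if x = toSkeleton (0 : C) then (1 : ℚ) else 0) = φ) :=
  ringelHall_algebra_exists_general C hfin
end
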